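/- arXiv:cs/0611161 — 3 statements merged into one kernel-verified Lean document; each statement's English description precedes it below -/
import Mathlib

section
/- For every integer h ≥ 2 and every integer w with 0 ≤ w ≤ 2^(h-1), we have sin²(w·π/2^h) ≤ (2^h/4)·sin²(π/2^h)·w. -/
/-!
On `[0, π/2]` one has `sin² t ≤ 0.74 t`: for `t ≤ 0.74` because `sin t ≤ t`, and beyond that
because `cos t = sin (π/2 - t) ≥ r - r³/6` with `r = π/2 - t` (the ratio `sin² t / t` peaks near
`0.7246`). Conversely `sin x ≥ x - x³/6` gives `(N/4) sin²(π/N) ≥ (π/4)(1 - π²/384)² · π/N`,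
and `(π/4)(1 - π²/384)² ≈ 0.7455 ≥ 0.74` once `N ≥ 8`. With `N = 2^h` this settles `h ≥ 3`;
for `h = 2` the values `w = 0, 1, 2` are checked directly, the last two with equality.
-/

open Real

theorem sin_sq_le_mul_of_le_pi_div_two {t : ℝ} (ht0 : 0 ≤ t) (ht : t ≤ π / 2) :
    sin t ^ 2 ≤ 0.74 * t := by
  rcases le_or_gt t 0.74 with hsmall | hlarge
  · nlinarith [sin_sq_le_sq (x := t)]
  set r := π / 2 - t with hr
  have hr0 : 0 ≤ r := by linarith
  have hr1 : r ≤ 0.831 := by linarith [pi_lt_d4]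
  have hcos : r - r ^ 3 / 6 ≤ cos t := by
    rw [show t = π / 2 - r by ring, cos_pi_div_two_sub]
    exact sin_ge_sub_cube hr0
  have hpos : 0 ≤ r - r ^ 3 / 6 := by nlinarith [mul_le_mul hr1 hr1 hr0 (by norm_num)]
  calc sin t ^ 2 = 1 - cos t ^ 2 := by rw [sin_sq]
    _ ≤ 1 - (r - r ^ 3 / 6) ^ 2 := by gcongr
    _ ≤ 0.74 * t := by
      rw [show t = π / 2 - r by ring]
      nlinarith [pi_gt_d4, sq_nonneg (r - 0.405), mul_nonneg hr0 (sq_nonneg (r - 0.405)),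
        pow_nonneg hr0 4]

theorem mul_pi_div_le_div_four_mul_sin_sq {N : ℝ} (hN : 8 ≤ N) :
    0.74 * (π / N) ≤ N / 4 * sin (π / N) ^ 2 := by
  set x := π / N with hx
  have hx0 : 0 < x := by positivity
  have hxN : N * x = π := by rw [hx]; field_simp
  have hx1 : x ≤ π / 8 := div_le_div_of_nonneg_left pi_pos.le (by norm_num) hN
  have hsin : x * (1 - x ^ 2 / 6) ≤ sin x := by
    have := sin_ge_sub_cube hx0.le; linarith
  have hx2 : x ^ 2 ≤ 0.155 := by nlinarith [pi_lt_d4, mul_le_mul hx1 hx1 hx0.le (by positivity)]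
  have hfac : 0 ≤ 1 - x ^ 2 / 6 := by nlinarith
  calc 0.74 * x ≤ π / 4 * (1 - x ^ 2 / 6) ^ 2 * x := by
        gcongr; nlinarith [pi_gt_d4]
    _ = N / 4 * (x * (1 - x ^ 2 / 6)) ^ 2 := by rw [← hxN]; ring
    _ ≤ N / 4 * sin x ^ 2 := by gcongr

theorem sin_sq_mul_pi_div_le {N w : ℝ} (hN : 8 ≤ N) (hw0 : 0 ≤ w) (hw : w ≤ N / 2) :
    sin (w * π / N) ^ 2 ≤ N / 4 * sin (π / N) ^ 2 * w := by
  have hN0 : 0 < N := by linarith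
  have ht : w * π / N ≤ π / 2 := by
    rw [div_le_div_iff₀ hN0 two_pos]; nlinarith [pi_pos]
  calc sin (w * π / N) ^ 2 ≤ 0.74 * (w * π / N) :=
        sin_sq_le_mul_of_le_pi_div_two (by positivity) ht
    _ = 0.74 * (π / N) * w := by ring
    _ ≤ N / 4 * sin (π / N) ^ 2 * w :=
        mul_le_mul_of_nonneg_right (mul_pi_div_le_div_four_mul_sin_sq hN) hw0

theorem sin_sq_linear_bound (h : ℕ) (hh : 2 ≤ h) (w : ℕ) (hw : w ≤ 2 ^ (h - 1)) :
    Real.sin ((w : ℝ) * π / 2 ^ h) ^ 2 ≤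
      (2 ^ h / 4) * Real.sin (π / 2 ^ h) ^ 2 * w := by
  obtain rfl | hh3 := hh.eq_or_lt
  · have hsin : sin (π / 2 ^ 2) ^ 2 = 1 / 2 := by
      rw [show π / 2 ^ 2 = π / 4 by norm_num, sin_pi_div_four, div_pow, sq_sqrt zero_le_two]
      norm_num
    rw [hsin]
    interval_cases w
    · simp
    · rw [Nat.cast_one, one_mul, hsin]; norm_num
    · rw [show ((2 : ℕ) : ℝ) * π / 2 ^ 2 = π / 2 by push_cast; ring, sin_pi_div_two]; norm_num
  · have hN : (8 : ℝ) ≤ 2 ^ h := by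
      exact_mod_cast (Nat.pow_le_pow_right two_pos hh3 : 2 ^ 3 ≤ 2 ^ h)
    refine sin_sq_mul_pi_div_le hN w.cast_nonneg ?_
    rw [show h = h - 1 + 1 by omega, pow_succ]
    simpa using (Nat.cast_le (α := ℝ)).2 hw
end

section
/- For any two elements a, b of ℤ/2^h with h ≥ 2, the squared distance |e^{2πia/2^h} − e^{2πib/2^h}|² equals 4·sin²((a−b)·π/2^h), and this is at most 2^h·sin²(π/2^h)·wt_L(a−b), where wt_L(c) = min(c, 2^h − c) is the Lee weight of the residue c ∈ {0,…,2^h−1}. -/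
/-!
Since `j ↦ exp (2πij/N)` is an additive character of `ZMod N`, the two points differ by the
rotation `exp (2πi(a - b)/N)`, so their distance is `|exp (2πiw/N) - 1| = 2 |sin (wπ/N)|` with
`w = (a - b).val`.

For the bound, `sin (wπ/N) = sin ((N - w)π/N)` lets us replace `w` by the Lee weight `m`, so
`2m ≤ N`, and with `t = π/N` the angle `mt` lies in `[0, π/2]`. There `sin² x ≤ (37/50) x` (the
maximum of `sin² x / x` is about `0.7246`), while `sin t ≥ t - t³/6` gives
`(π/4) (sin t / t)² ≥ 37/50` once `t ≤ π/8`; together, `4 sin² (mt) ≤ N sin² t · m` for `N ≥ 8`.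
For `N = 4` the inequality is an equality at `m = 1, 2` and is checked by hand.
-/

open Real

lemma sin_sq_le_mul_of_le_pi_div_two_s2 {x : ℝ} (hx₀ : 0 ≤ x) (hx : x ≤ π / 2) :
    Real.sin x ^ 2 ≤ 37 / 50 * x := by
  rcases le_or_gt x (37 / 50) with hsmall | hlarge
  · nlinarith [sin_le hx₀, sin_nonneg_of_nonneg_of_le_pi hx₀ (by linarith [pi_pos])]
  · set s := π / 2 - x with hs
    have hs₀ : 0 ≤ s := by linarith
    have hs₁ : s ≤ 21 / 25 := by linarith [pi_lt_d2]
    have hsin : s - s ^ 3 / 6 ≤ Real.sin s := sin_ge_sub_cube hs₀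
    have hcube : 0 ≤ s - s ^ 3 / 6 := by nlinarith [mul_nonneg hs₀ (mul_nonneg hs₀ hs₀)]
    have hpoly : 1 - (s - s ^ 3 / 6) ^ 2 + 37 / 50 * s ≤ 5809 / 5000 := by
      nlinarith [mul_nonneg (mul_nonneg hs₀ hs₀) (sq_nonneg (s - 43 / 100)), pow_nonneg hs₀ 6,
        mul_nonneg (mul_nonneg hs₀ hs₀) (sub_nonneg.2 hs₁)]
    have hx_eq : x = π / 2 - s := by ring
    rw [hx_eq, sin_pi_div_two_sub, cos_sq']
    nlinarith [pi_gt_d2, pow_le_pow_left₀ hcube hsin 2]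

lemma mul_sq_le_sin_sq_of_le_pi_div_eight {t : ℝ} (ht₀ : 0 ≤ t) (ht : t ≤ π / 8) :
    37 / 50 * t ^ 2 ≤ π / 4 * Real.sin t ^ 2 := by
  have ht₁ : t ≤ 2 / 5 := by linarith [pi_lt_d2]
  have hsin : t - t ^ 3 / 6 ≤ Real.sin t := sin_ge_sub_cube ht₀
  have hcube : 0 ≤ t - t ^ 3 / 6 := by nlinarith [mul_nonneg ht₀ (mul_nonneg ht₀ ht₀)]
  have hfactor : 37 / 50 ≤ π / 4 * (1 - t ^ 2 / 6) ^ 2 := by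
    nlinarith [pi_gt_d2, mul_nonneg ht₀ ht₀]
  calc 37 / 50 * t ^ 2 ≤ π / 4 * (1 - t ^ 2 / 6) ^ 2 * t ^ 2 := by gcongr
    _ = π / 4 * (t - t ^ 3 / 6) ^ 2 := by ring
    _ ≤ π / 4 * Real.sin t ^ 2 := by gcongr

lemma four_mul_sin_sq_le_of_eight_le {N m : ℕ} (hN : 8 ≤ N) (hm : 2 * m ≤ N) :
    4 * Real.sin (m * π / N) ^ 2 ≤ N * Real.sin (π / N) ^ 2 * m := by
  have hN₀ : (0 : ℝ) < N := by positivity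
  have hN₈ : (8 : ℝ) ≤ N := by exact_mod_cast hN
  have hm' : 2 * (m : ℝ) ≤ N := by exact_mod_cast hm
  set t := π / N with ht
  have ht₀ : 0 < t := by positivity
  have hNt : N * t = π := by rw [ht]; field_simp
  have hmt : (m : ℝ) * π / N = m * t := by rw [ht]; ring
  have hangle : (m : ℝ) * t ≤ π / 2 := by nlinarith
  have hsmall : t ≤ π / 8 := by rw [ht]; gcongr
  calc 4 * Real.sin (m * π / N) ^ 2 ≤ 4 * (37 / 50 * (m * t)) := by
        rw [hmt]; gcongr; exact sin_sq_le_mul_of_le_pi_div_two_s2 (by positivity) hangle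
    _ = 4 / t * (37 / 50 * t ^ 2) * m := by field_simp
    _ ≤ 4 / t * (π / 4 * Real.sin t ^ 2) * m := by
        gcongr 4 / t * ?_ * _; exact mul_sq_le_sin_sq_of_le_pi_div_eight ht₀.le hsmall
    _ = N * Real.sin t ^ 2 * m := by rw [← hNt]; field_simp

lemma four_mul_sin_sq_le_four {m : ℕ} (hm : m ≤ 2) :
    4 * Real.sin (m * π / 4) ^ 2 ≤ 4 * Real.sin (π / 4) ^ 2 * m := by
  have hsin : Real.sin (π / 4) ^ 2 = 1 / 2 := by
    rw [sin_pi_div_four, div_pow, sq_sqrt zero_le_two]; norm_num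
  interval_cases m
  · simp
  · simp
  · rw [show ((2 : ℕ) : ℝ) * π / 4 = π / 2 by push_cast; ring, sin_pi_div_two, hsin]; norm_num

lemma four_mul_sin_sq_le_mul_min {N w : ℕ} (hN : N = 4 ∨ 8 ≤ N) (hw : w ≤ N) :
    4 * Real.sin (w * π / N) ^ 2 ≤ N * Real.sin (π / N) ^ 2 * (min w (N - w) : ℕ) := by
  have half_bound : ∀ m : ℕ, 2 * m ≤ N →
      4 * Real.sin (m * π / N) ^ 2 ≤ N * Real.sin (π / N) ^ 2 * m := by
    rintro m hm
    rcases hN with rfl | hN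
    · exact_mod_cast four_mul_sin_sq_le_four (by omega)
    · exact four_mul_sin_sq_le_of_eight_le hN hm
  rcases le_total (2 * w) N with hle | hge
  · rw [min_eq_left (by omega)]
    exact half_bound w hle
  · have hN₀ : (N : ℝ) ≠ 0 := Nat.cast_ne_zero.2 (by omega)
    have hreflect : Real.sin (w * π / N) = Real.sin ((N - w : ℕ) * π / N) := by
      rw [Nat.cast_sub hw, sub_mul, sub_div, mul_div_cancel_left₀ π hN₀, sin_pi_sub]
    rw [min_eq_right (by omega), hreflect]
    exact half_bound (N - w) (by omega)

lemma norm_exp_sub_exp_sq_eq {N : ℕ} [NeZero N] (a b : ZMod N) :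
    ‖Complex.exp (2 * π * Complex.I * (a.val : ℂ) / N) -
        Complex.exp (2 * π * Complex.I * (b.val : ℂ) / N)‖ ^ 2 =
      4 * Real.sin (((a - b).val : ℝ) * π / N) ^ 2 := by
  have hsplit : (ZMod.stdAddChar a : ℂ) = ZMod.stdAddChar (a - b) * ZMod.stdAddChar b := by
    rw [← AddChar.map_add_eq_mul, sub_add_cancel]
  have hdiff : (ZMod.stdAddChar (a - b) : ℂ) =
      Complex.exp (Complex.I * ↑(2 * π * (a - b).val / N)) := by
    rw [ZMod.stdAddChar_apply, ZMod.toCircle_apply]; push_cast; ring_nf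
  simp only [← ZMod.toCircle_apply, ← ZMod.stdAddChar_apply]
  rw [hsplit, ← sub_one_mul, norm_mul, ZMod.stdAddChar_apply b, Circle.norm_coe, mul_one, hdiff,
    Complex.norm_exp_I_mul_ofReal_sub_one, norm_mul, Real.norm_eq_abs, Real.norm_eq_abs, mul_pow,
    sq_abs, sq_abs]
  ring_nf

theorem psk_dist_eq_and_lee_bound (h : ℕ) (hh : 2 ≤ h) (a b : ZMod (2 ^ h)) :
    ‖Complex.exp (2 * π * Complex.I * (a.val : ℂ) / 2 ^ h) -
        Complex.exp (2 * π * Complex.I * (b.val : ℂ) / 2 ^ h)‖ ^ 2 =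
      4 * Real.sin (((a - b).val : ℝ) * π / 2 ^ h) ^ 2 ∧
    4 * Real.sin (((a - b).val : ℝ) * π / 2 ^ h) ^ 2 ≤
      2 ^ h * Real.sin (π / 2 ^ h) ^ 2 *
        (min (a - b).val (2 ^ h - (a - b).val) : ℕ) := by
  have hN : 2 ^ h = 4 ∨ 8 ≤ 2 ^ h := by
    rcases hh.eq_or_lt with rfl | h3
    · exact Or.inl rfl
    · exact Or.inr (by simpa using Nat.pow_le_pow_right two_pos h3)
  constructor
  · exact_mod_cast norm_exp_sub_exp_sq_eq a b
  · exact_mod_cast four_mul_sin_sq_le_mul_min hN (ZMod.val_lt (a - b)).le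
end

section
/- Let B ⊆ (ℤ/2)^n be a nonempty binary code with covering radius ρ(B) ≤ n/2. Then for every offset w ∈ (ℤ/2)^n and every permutation σ of {0,…,n−1}, the maximum over b ∈ B of PMEPR(σ(b)+w) is at least (1/n)·(n − 2ρ(B))², where PMEPR(c) = (1/n)·sup_{0≤θ<1} |Σ_i (−1)^{c_i} e^{2πi·iθ}|². -/
open Real Complex Finset

/-- Hamming weight of a binary word. -/
def wtH {n : ℕ} (c : Fin n → ZMod 2) : ℕ := (Finset.univ.filter fun i => c i ≠ 0).card

/-- Covering radius of a nonempty binary code. -/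
def covRad {n : ℕ} (B : Finset (Fin n → ZMod 2)) (hB : B.Nonempty) : ℕ :=
  Finset.univ.sup fun x => B.inf' hB fun b => wtH (b + x)

/-- PMEPR of a binary word (BPSK-modulated OFDM signal). -/
noncomputable def PMEPR {n : ℕ} (c : Fin n → ZMod 2) : ℝ :=
  (1 / n) * sSup ((fun θ : ℝ =>
    ‖(∑ i : Fin n, (if c i = 0 then 1 else -1 : ℂ) *
      Complex.exp (2 * π * Complex.I * (i : ℕ) * θ))‖ ^ 2) '' Set.Ico 0 1)

/-! At `θ = 0` the BPSK signal of `c` equals `n - 2 wt_H(c)`, so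
`PMEPR c ≥ (n - 2 wt_H(c))² / n`. Every word, in particular `σ⁻¹(w)`, lies within distance
`ρ(B)` of some `b ∈ B`; permuting coordinates preserves weight, so `σ(b) + w` has weight at
most `ρ(B) ≤ n/2`, and its PMEPR is at least `(n - 2ρ(B))² / n`. -/

section HammingWeight

variable {n : ℕ}

theorem wtH_comp_perm (c : Fin n → ZMod 2) (σ : Equiv.Perm (Fin n)) :
    wtH (c ∘ σ) = wtH c :=
  Finset.card_equiv σ (by simp)

theorem exists_wtH_add_le_covRad (B : Finset (Fin n → ZMod 2)) (hB : B.Nonempty)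
    (x : Fin n → ZMod 2) : ∃ b ∈ B, wtH (b + x) ≤ covRad B hB :=
  (Finset.inf'_le_iff hB).mp
    (Finset.le_sup (f := fun x => B.inf' hB fun b => wtH (b + x)) (Finset.mem_univ x))

end HammingWeight

section Signal

variable {n : ℕ}

noncomputable def bpskSignal (c : Fin n → ZMod 2) (θ : ℝ) : ℂ :=
  ∑ i : Fin n, (if c i = 0 then 1 else -1 : ℂ) * Complex.exp (2 * π * Complex.I * (i : ℕ) * θ)

theorem PMEPR_eq_sSup (c : Fin n → ZMod 2) :
    PMEPR c = (1 / n) * sSup ((fun θ => ‖bpskSignal c θ‖ ^ 2) '' Set.Ico 0 1) :=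
  rfl

theorem norm_bpskSignal_le (c : Fin n → ZMod 2) (θ : ℝ) : ‖bpskSignal c θ‖ ≤ n := by
  calc ‖bpskSignal c θ‖
      ≤ ∑ i : Fin n, ‖(if c i = 0 then 1 else -1 : ℂ) *
          Complex.exp (2 * π * Complex.I * (i : ℕ) * θ)‖ := norm_sum_le _ _
    _ = ∑ _i : Fin n, (1 : ℝ) := by
        refine Finset.sum_congr rfl fun i _ => ?_
        rw [norm_mul, Complex.norm_exp]
        split_ifs <;> simp [Complex.mul_re]
    _ = n := by simp

theorem bpskSignal_zero (c : Fin n → ZMod 2) :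
    bpskSignal c 0 = ((n - 2 * wtH c : ℝ) : ℂ) := by
  have hsign : ∀ i, (if c i = 0 then 1 else -1 : ℂ) = 1 - 2 * if c i ≠ 0 then 1 else 0 := by
    intro i
    by_cases h : c i = 0 <;> norm_num [h]
  simp only [bpskSignal, Complex.ofReal_zero, mul_zero, Complex.exp_zero, mul_one, hsign,
    Finset.sum_sub_distrib, ← Finset.mul_sum, Finset.sum_boole, Finset.sum_const,
    Finset.card_univ, Fintype.card_fin, nsmul_eq_mul, mul_one, wtH]
  push_cast
  ring

theorem sq_sub_two_mul_wtH_le_PMEPR (c : Fin n → ZMod 2) :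
    (1 / n) * ((n : ℝ) - 2 * wtH c) ^ 2 ≤ PMEPR c := by
  rw [PMEPR_eq_sSup]
  gcongr
  have hbdd : BddAbove ((fun θ => ‖bpskSignal c θ‖ ^ 2) '' Set.Ico 0 1) := by
    refine ⟨(n : ℝ) ^ 2, ?_⟩
    rintro _ ⟨θ, -, rfl⟩
    exact pow_le_pow_left₀ (norm_nonneg _) (norm_bpskSignal_le c θ) 2
  refine le_csSup hbdd ⟨0, by simp, ?_⟩
  change ‖bpskSignal c 0‖ ^ 2 = _
  rw [bpskSignal_zero, Complex.norm_real, Real.norm_eq_abs, sq_abs]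

end Signal

theorem pmepr_lower_bound_binary_general (n : ℕ) (B : Finset (Fin n → ZMod 2))
    (hB : B.Nonempty) (hρ : 2 * covRad B hB ≤ n)
    (w : Fin n → ZMod 2) (σ : Equiv.Perm (Fin n)) :
    (1 / n) * ((n : ℝ) - 2 * covRad B hB) ^ 2 ≤
      B.sup' hB fun b => PMEPR (fun i => b (σ i) + w i) := by
  obtain ⟨b, hbB, hb⟩ := exists_wtH_add_le_covRad B hB (w ∘ σ.symm)
  have hperm : (fun i => b (σ i) + w i) = (b + w ∘ σ.symm) ∘ σ := by
    ext i
    simp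
  have hρ' : (2 * covRad B hB : ℝ) ≤ n := by exact_mod_cast hρ
  have hwtρ : (wtH (fun i => b (σ i) + w i) : ℝ) ≤ covRad B hB := by
    rw [hperm, wtH_comp_perm]
    exact_mod_cast hb
  calc (1 / n) * ((n : ℝ) - 2 * covRad B hB) ^ 2
      ≤ (1 / n) * ((n : ℝ) - 2 * wtH (fun i => b (σ i) + w i)) ^ 2 := by
        gcongr
    _ ≤ PMEPR (fun i => b (σ i) + w i) := sq_sub_two_mul_wtH_le_PMEPR _
    _ ≤ B.sup' hB fun b => PMEPR (fun i => b (σ i) + w i) := by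
        apply Finset.le_sup' _ hbB

theorem pmepr_lower_bound_binary (n : ℕ) (hn : 0 < n) (B : Finset (Fin n → ZMod 2))
    (hB : B.Nonempty) (hρ : 2 * covRad B hB ≤ n)
    (w : Fin n → ZMod 2) (σ : Equiv.Perm (Fin n)) :
    (1 / n) * ((n : ℝ) - 2 * covRad B hB) ^ 2 ≤
      B.sup' hB fun b => PMEPR (fun i => b (σ i) + w i) :=
  pmepr_lower_bound_binary_general n B hB hρ w σ
end
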